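/- Let f, g ∈ L¹(ℝ, ℂ) and let h, h' : ℝ → ℂ be almost periodic functions. If (f̂(y) + h(y)) · (ĝ(y) + h'(y)) = 1 for all y ∈ ℝ, where f̂(y) = ∫_ℝ e^{−iyt} f(t) dt and similarly for ĝ, then h(y) · h'(y) = 1 for all y ∈ ℝ. (That is, if an element of the algebra 𝒜 is invertible, then its almost periodic part is invertible among almost periodic functions.) -/

import Mathlib

/-!
Along a suitable filter of large `y`, every character `y ↦ exp (i λ y)` tends to `1`: the
filter is nontrivial because in the compact group `ℝ → Circle` the powers of an element return
arbitrarily close to `1`. The functions whose translates converge uniformly to themselves along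
this filter form a closed subspace containing the characters, hence every almost periodic
function; meanwhile Fourier transforms tend to `0` there (Riemann–Lebesgue). Passing to the
limit in `(f̂ + h) (x + y) * (ĝ + h') (x + y) = 1` gives `h x * h' x = 1`.
-/

open MeasureTheory

/-- The set of almost periodic functions: the closure, in the Banach space of
bounded continuous functions `ℝ → ℂ` with the sup norm, of the linear span of
the functions `y ↦ exp (I * λ * y)`, `λ ∈ ℝ`. -/
def AlmostPeriodic : Set (BoundedContinuousFunction ℝ ℂ) :=
  closure (Submodule.span ℂ
    {g : BoundedContinuousFunction ℝ ℂ |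
      ∃ lam : ℝ, ∀ y : ℝ, g y = Complex.exp (Complex.I * lam * y)} : Set (BoundedContinuousFunction ℝ ℂ))

open Filter Topology

namespace BoundedContinuousFunction

variable {G E : Type*} [TopologicalSpace G] [Add G] [ContinuousAdd G] [NormedAddCommGroup E]
  (𝕜 : Type*) [NormedField 𝕜] [NormedSpace 𝕜 E]

def recurrentAlong (l : Filter G) : Submodule 𝕜 (G →ᵇ E) where
  carrier := {u | Tendsto (fun y => u.compContinuous (ContinuousMap.addRight y)) l (𝓝 u)}
  zero_mem' := tendsto_const_nhds
  add_mem' hu hv := hu.add hv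
  smul_mem' c _ hu := hu.const_smul c

lemma isClosed_recurrentAlong (l : Filter G) :
    IsClosed (recurrentAlong (E := E) 𝕜 l : Set (G →ᵇ E)) :=
  (LipschitzWith.uniformEquicontinuous _ 1 fun _ => lipschitz_compContinuous _).equicontinuous
    |>.isClosed_setOfPred_tendsto continuous_id

end BoundedContinuousFunction

open BoundedContinuousFunction Complex

lemma exp_I_mul_mul_eq_circleExp (lam y : ℝ) :
    exp (I * lam * y) = Circle.exp (lam * y) := by
  rw [Circle.coe_exp]; push_cast; ring_nf

lemma mem_recurrentAlong_of_eq_exp {l : Filter ℝ} {u : ℝ →ᵇ ℂ} {lam : ℝ}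
    (hu : ∀ y, u y = exp (I * lam * y)) (hl : Tendsto (fun y : ℝ => exp (I * lam * y)) l (𝓝 1)) :
    u ∈ recurrentAlong ℂ l := by
  have hdist : ∀ y, dist (u.compContinuous (ContinuousMap.addRight y)) u ≤
      ‖exp (I * lam * y) - 1‖ := fun y =>
    (dist_le (norm_nonneg _)).2 fun x => by
      have hmul : u (x + y) - u x = exp (I * lam * x) * (exp (I * lam * y) - 1) := by
        rw [hu, hu, mul_sub, mul_one, ← exp_add]; push_cast; ring_nf
      rw [compContinuous_apply, ContinuousMap.coe_addRight, dist_eq_norm, hmul, norm_mul,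
        exp_I_mul_mul_eq_circleExp, Circle.norm_coe, one_mul]
  have hnorm : Tendsto (fun y : ℝ => ‖exp (I * lam * y) - 1‖) l (𝓝 0) := by
    simpa using (hl.sub_const 1).norm
  exact tendsto_iff_dist_tendsto_zero.2 (squeeze_zero (fun _ => dist_nonneg) hdist hnorm)

noncomputable def recurrenceFilter : Filter ℝ :=
  comap (fun y lam : ℝ => Circle.exp (lam * y)) (𝓝 1) ⊓ atTop

instance : NeBot recurrenceFilter := by
  rw [recurrenceFilter, neBot_inf_comap_iff_map']
  refine MapClusterPt.of_comp tendsto_natCast_atTop_atTop ?_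
  convert mapClusterPt_one_atTop_pow (fun lam : ℝ => Circle.exp lam) using 2 with n
  ext lam : 1
  rw [Function.comp_apply, mul_comm, Circle.exp_natCast_mul, Pi.pow_apply]

lemma tendsto_exp_recurrenceFilter (lam : ℝ) :
    Tendsto (fun y : ℝ => exp (I * lam * y)) recurrenceFilter (𝓝 1) := by
  have hΦ : Tendsto (fun y lam : ℝ => Circle.exp (lam * y)) recurrenceFilter (𝓝 1) :=
    tendsto_comap.mono_left inf_le_left
  simp only [exp_I_mul_mul_eq_circleExp]
  exact (continuous_subtype_val.tendsto 1).comp (((continuous_apply lam).tendsto 1).comp hΦ)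

lemma almostPeriodic_subset_recurrentAlong :
    AlmostPeriodic ⊆ (recurrentAlong (E := ℂ) ℂ recurrenceFilter : Set (ℝ →ᵇ ℂ)) :=
  closure_minimal (Submodule.span_le.2 fun _ ⟨lam, hu⟩ =>
      mem_recurrentAlong_of_eq_exp hu (tendsto_exp_recurrenceFilter lam))
    (isClosed_recurrentAlong ℂ _)

lemma tendsto_apply_add_recurrenceFilter {u : ℝ →ᵇ ℂ} (hu : u ∈ AlmostPeriodic) (x : ℝ) :
    Tendsto (fun y => u (x + y)) recurrenceFilter (𝓝 (u x)) :=
  ((continuous_eval_const x).tendsto u).comp (almostPeriodic_subset_recurrentAlong hu)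

lemma tendsto_integral_exp_neg_I_mul_cocompact (f : ℝ → ℂ) :
    Tendsto (fun y : ℝ => ∫ t : ℝ, exp (-(I * y * t)) * f t) (cocompact ℝ) (𝓝 0) := by
  have hscale : Tendsto (fun y : ℝ => y * (2 * Real.pi)⁻¹) (cocompact ℝ) (cocompact ℝ) :=
    (Homeomorph.mulRight₀ _ (by positivity)).map_cocompact.le
  refine ((Real.tendsto_integral_exp_smul_cocompact f).comp hscale).congr fun y =>
    integral_congr_ae (.of_forall fun t => ?_)
  simp only [Circle.smul_def, Real.fourierChar_apply, smul_eq_mul]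
  congr 2
  have : (Real.pi : ℂ) ≠ 0 := by exact_mod_cast Real.pi_ne_zero
  push_cast
  field_simp

theorem stmt_3_general (f g : ℝ → ℂ)
    (h h' : BoundedContinuousFunction ℝ ℂ)
    (hh : h ∈ AlmostPeriodic) (hh' : h' ∈ AlmostPeriodic)
    (hinv : ∀ y : ℝ,
      ((∫ t : ℝ, Complex.exp (-(Complex.I * y * t)) * f t) + h y) *
        ((∫ t : ℝ, Complex.exp (-(Complex.I * y * t)) * g t) + h' y) = 1) :
    ∀ y : ℝ, h y * h' y = 1 := by
  intro x
  have hlarge : Tendsto (x + ·) recurrenceFilter (cocompact ℝ) :=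
    (tendsto_atTop_add_const_left _ x (tendsto_id'.2 inf_le_right)).mono_right atTop_le_cocompact
  have hlim := (((tendsto_integral_exp_neg_I_mul_cocompact f).comp hlarge).add
    (tendsto_apply_add_recurrenceFilter hh x)).mul
    (((tendsto_integral_exp_neg_I_mul_cocompact g).comp hlarge).add
    (tendsto_apply_add_recurrenceFilter hh' x))
  simp only [Function.comp_def, hinv, zero_add] at hlim
  exact tendsto_nhds_unique tendsto_const_nhds hlim |>.symm

theorem stmt_3 (f g : ℝ → ℂ)
    (hf : Integrable f (volume : Measure ℝ)) (hg : Integrable g (volume : Measure ℝ))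
    (h h' : BoundedContinuousFunction ℝ ℂ)
    (hh : h ∈ AlmostPeriodic) (hh' : h' ∈ AlmostPeriodic)
    (hinv : ∀ y : ℝ,
      ((∫ t : ℝ, Complex.exp (-(Complex.I * y * t)) * f t) + h y) *
        ((∫ t : ℝ, Complex.exp (-(Complex.I * y * t)) * g t) + h' y) = 1) :
    ∀ y : ℝ, h y * h' y = 1 :=
  stmt_3_general f g h h' hh hh' hinv
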